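/- arXiv:1508.06255 — 5 statements merged into one kernel-verified Lean document; each statement's English description precedes it below -/
import Mathlib

section
/- Let (K, O) be a valued field, let L/K be a finite field extension, and let A be a subring of L containing O that is integrally closed in L. Then A is a Prüfer domain: for every prime ideal q of A, the localization A_q is a valuation ring, i.e. for any two elements a, b of A_q, either a divides b or b divides a. -/
open Finset Polynomial

section GH

variable {R L : Type*} [CommRing R] [Field L] [Algebra R L]

/-- If the leading coefficient is a unit, the root is integral. -/
lemma base_integral {n : ℕ} {x : L} {a : ℕ → R}
    (hroot : ∑ i ∈ range (n + 1), algebraMap R L (a i) * x ^ i = 0)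
    (hu : IsUnit (a n)) : IsIntegral R x := by
  obtain ⟨u, huu⟩ := hu
  refine ⟨X ^ n + ∑ i : Fin n, C (((u⁻¹ : Rˣ) : R) * a i) * X ^ (i : ℕ), ?_, ?_⟩
  · exact monic_X_pow_add (degree_sum_fin_lt _)
  · have h2 : (algebraMap R L ((u⁻¹ : Rˣ) : R)) * ∑ i ∈ range (n + 1),
        algebraMap R L (a i) * x ^ i = 0 := by rw [hroot, mul_zero]
    rw [mul_sum] at h2
    simp only [← mul_assoc, ← map_mul] at h2
    rw [sum_range_succ] at h2
    have hun : ((u⁻¹ : Rˣ) : R) * a n = 1 := by rw [← huu, Units.inv_mul]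
    rw [hun, map_one, one_mul] at h2
    simp only [map_mul] at h2 ⊢
    simp only [eval₂_add, eval₂_finset_sum, eval₂_mul, eval₂_C, eval₂_X_pow,
      eval₂_pow, eval₂_X]
    rw [Fin.sum_univ_eq_sum_range
      (fun i => algebraMap R L ((u⁻¹:Rˣ):R) * algebraMap R L (a i) * x ^ i)]
    linear_combination h2

/-- If the constant coefficient is a unit (and `x ≠ 0`), then `x⁻¹` is integral. -/
lemma base_integral_inv {n : ℕ} {x : L} (hx : x ≠ 0) {a : ℕ → R}
    (hroot : ∑ i ∈ range (n + 1), algebraMap R L (a i) * x ^ i = 0)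
    (hu : IsUnit (a 0)) : IsIntegral R x⁻¹ := by
  have hrev : ∑ i ∈ range (n + 1), algebraMap R L (a (n - i)) * x⁻¹ ^ i = 0 := by
    have key : ∑ i ∈ range (n + 1), algebraMap R L (a (n - i)) * x⁻¹ ^ i
        = ∑ i ∈ range (n + 1),
            algebraMap R L (a (n + 1 - 1 - i)) * x⁻¹ ^ (n - (n + 1 - 1 - i)) := by
      refine Finset.sum_congr rfl fun i hi => ?_
      rw [mem_range, Nat.lt_succ_iff] at hi
      have e1 : n + 1 - 1 - i = n - i := by omega
      have e2 : n - (n - i) = i := by omega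
      rw [e1, e2]
    rw [key,
      Finset.sum_range_reflect (fun k => algebraMap R L (a k) * x⁻¹ ^ (n - k)) (n + 1)]
    have : ∑ i ∈ range (n + 1), algebraMap R L (a i) * x⁻¹ ^ (n - i)
        = (∑ i ∈ range (n + 1), algebraMap R L (a i) * x ^ i) * x⁻¹ ^ n := by
      rw [Finset.sum_mul]
      refine Finset.sum_congr rfl fun i hi => ?_
      rw [mem_range, Nat.lt_succ_iff] at hi
      rw [mul_assoc]
      congr 1
      have hxn : x ^ n = x ^ i * x ^ (n - i) := by rw [← pow_add]; congr 1; omega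
      rw [inv_pow, inv_pow, hxn, mul_inv, ← mul_assoc,
        mul_inv_cancel₀ (pow_ne_zero _ hx), one_mul]
    rw [this, hroot, zero_mul]
  exact base_integral (a := fun i => a (n - i)) hrev (by simpa using hu)

/-- The "u-lemma": the partial sum `y` is integral over `R`. -/
lemma y_integral {n j : ℕ} (hj : j ≤ n) {x : L} (hx : x ≠ 0) (a : ℕ → R)
    (hroot : ∑ i ∈ range (n + 1), algebraMap R L (a i) * x ^ i = 0) :
    IsIntegral R (∑ i ∈ range (n + 1 - j), algebraMap R L (a (j + i)) * x ^ i) := by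
  set φ := algebraMap R L with hφ
  set y : L := ∑ i ∈ range (n + 1 - j), φ (a (j + i)) * x ^ i with hy
  have hzero : ∑ i ∈ range (n + 1), φ (a i) * x ^ ((i : ℤ) - j) = 0 := by
    have : ∑ i ∈ range (n + 1), φ (a i) * x ^ ((i : ℤ) - j)
        = (∑ i ∈ range (n + 1), φ (a i) * x ^ i) * x ^ (-(j : ℤ)) := by
      rw [Finset.sum_mul]
      refine Finset.sum_congr rfl fun i _ => ?_
      rw [mul_assoc, ← zpow_natCast x i, ← zpow_add₀ hx, sub_eq_add_neg]
    rw [this, hroot, zero_mul]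
  have hsplit : ∑ i ∈ range j, φ (a i) * x ^ ((i : ℤ) - j)
      + ∑ i ∈ Ico j (n + 1), φ (a i) * x ^ ((i : ℤ) - j) = 0 := by
    rw [Finset.sum_range_add_sum_Ico _ (by omega)]; exact hzero
  have hyIco : y = ∑ i ∈ Ico j (n + 1), φ (a i) * x ^ ((i : ℤ) - j) := by
    rw [hy, Finset.sum_Ico_eq_sum_range]
    refine Finset.sum_congr rfl fun i _ => ?_
    congr 1
    rw [show ((j + i : ℕ) : ℤ) - j = (i : ℤ) by push_cast; ring, zpow_natCast]
  have hrep2 : y = -∑ i ∈ range j, φ (a i) * x ^ ((i : ℤ) - j) := by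
    rw [hyIco]; linear_combination hsplit
  -- the submodule
  set N : Submodule R L :=
    Submodule.span R ((fun k : ℤ => x ^ k) '' Set.Icc (-(j : ℤ)) ((n : ℤ) - j)) with hN
  have hgen : ∀ k : ℤ, -(j : ℤ) ≤ k → k ≤ (n : ℤ) - j → x ^ k ∈ N := fun k h1 h2 =>
    Submodule.subset_span ⟨k, ⟨h1, h2⟩, rfl⟩
  have hsmulgen : ∀ k : ℤ, -(j : ℤ) ≤ k → k ≤ (n : ℤ) - j → y * x ^ k ∈ N := by
    intro k h1 h2
    rcases le_or_gt 0 k with hk | hk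
    · rw [hrep2, neg_mul, Finset.sum_mul]
      refine N.neg_mem (Submodule.sum_mem N fun i hi => ?_)
      rw [mem_range] at hi
      rw [mul_assoc, ← zpow_add₀ hx, ← Algebra.smul_def]
      exact N.smul_mem _ (hgen _ (by omega) (by omega))
    · rw [hy, Finset.sum_mul]
      refine Submodule.sum_mem N fun i hi => ?_
      rw [mem_range] at hi
      rw [mul_assoc, ← zpow_natCast x i, ← zpow_add₀ hx, ← Algebra.smul_def]
      exact N.smul_mem _ (hgen _ (by omega) (by omega))
  refine isIntegral_of_smul_mem_submodule N ?_ ?_ y ?_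
  · intro hbot
    have h1 : (1 : L) ∈ N := by
      simpa using hgen 0 (by omega) (by omega)
    rw [hbot] at h1
    simpa using h1
  · exact Submodule.fg_span ((Set.finite_Icc _ _).image _)
  · intro m hm
    refine Submodule.span_induction ?_ ?_ ?_ ?_ hm
    · rintro _ ⟨k, ⟨h1, h2⟩, rfl⟩
      simpa [smul_eq_mul] using hsmulgen k h1 h2
    · simp
    · intro p q _ _ hp hq
      simpa [smul_eq_mul, mul_add] using N.add_mem hp hq
    · intro r p _ hp
      have : y • (r • p) = r • (y • p) := smul_comm _ _ _
      rw [this]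
      exact N.smul_mem _ hp

/-- Main induction (Gilmer–Hoffmann style). -/
lemma gh_main [IsLocalRing R]
    (hinj : Function.Injective (algebraMap R L))
    (hic : ∀ y : L, IsIntegral R y → ∃ r : R, algebraMap R L r = y)
    {x : L} (hx : x ≠ 0) :
    ∀ n : ℕ, ∀ a : ℕ → R, ∀ j : ℕ, j ≤ n → IsUnit (a j) →
      (∑ i ∈ range (n + 1), algebraMap R L (a i) * x ^ i = 0) →
      (∃ r, algebraMap R L r = x) ∨ (∃ r, algebraMap R L r = x⁻¹) := by
  intro n
  induction n using Nat.strong_induction_on with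
  | _ n ih =>
  intro a j hj hu hroot
  set φ := algebraMap R L with hφ
  rcases Nat.eq_zero_or_pos n with rfl | hn
  · -- degree 0 : contradiction
    interval_cases j
    rw [Finset.sum_range_one, pow_zero, mul_one] at hroot
    have : a 0 = 0 := hinj (by rw [hroot, map_zero])
    rw [this] at hu
    exact absurd hu not_isUnit_zero
  by_cases hjn : j = n
  · left; exact hic x (base_integral hroot (hjn ▸ hu))
  have hjn' : j < n := lt_of_le_of_ne hj hjn
  set y : L := ∑ i ∈ range (n + 1 - j), φ (a (j + i)) * x ^ i with hy
  obtain ⟨b, hb⟩ := hic y (y_integral hj hx a hroot)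
  have hcase : IsUnit b ∨ IsUnit (a j - b) := by
    refine IsLocalRing.isUnit_or_isUnit_of_isUnit_add ?_
    rwa [add_sub_cancel]
  -- useful : y * x ^ j = -∑_{i<j} φ(aᵢ) xⁱ
  have hyxj : y * x ^ j + ∑ i ∈ range j, φ (a i) * x ^ i = 0 := by
    have h1 : y * x ^ j = ∑ i ∈ Ico j (n + 1), φ (a i) * x ^ i := by
      rw [hy, Finset.sum_mul, Finset.sum_Ico_eq_sum_range]
      refine Finset.sum_congr rfl fun i _ => ?_
      rw [mul_assoc, ← pow_add, Nat.add_comm i j]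
    rw [h1, add_comm, Finset.sum_range_add_sum_Ico _ (by omega)]
    exact hroot
  rcases hcase with hbu | hbu
  · -- case B : new polynomial of degree j < n with unit leading coefficient b
    refine ih j hjn' (fun i => if i = j then b else a i) j le_rfl (by simpa using hbu) ?_
    rw [Finset.sum_range_succ]
    simp only [eq_self_iff_true, if_true]
    have : ∑ i ∈ range j, φ (if i = j then b else a i) * x ^ i
        = ∑ i ∈ range j, φ (a i) * x ^ i := by
      refine Finset.sum_congr rfl fun i hi => ?_
      rw [mem_range] at hi
      rw [if_neg (by omega)]
    rw [this, hb]
    linear_combination hyxj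
  · -- case A or j = 0
    by_cases hj0 : j = 0
    · -- then y = ... and b relates; a 0 is a unit: x⁻¹ integral
      subst hj0
      have hy0 : y * x ^ 0 + ∑ i ∈ range 0, φ (a i) * x ^ i = 0 := hyxj
      simp only [pow_zero, mul_one, Finset.range_zero, Finset.sum_empty, add_zero] at hy0
      have hb0 : b = 0 := hinj (by rw [hb, hy0, map_zero])
      rw [hb0, sub_zero] at hbu
      right
      exact hic x⁻¹ (base_integral_inv hx hroot hbu)
    · -- case A : degree n - j polynomial with unit constant coefficient
      refine ih (n - j) (by omega) (fun k => if k = 0 then a j - b else a (j + k)) 0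
        (Nat.zero_le _) (by simpa using hbu) ?_
      rw [Finset.sum_range_succ']
      simp only [eq_self_iff_true, if_true, pow_zero, mul_one]
      have hstep : ∀ i ∈ range (n - j), φ (if i + 1 = 0 then a j - b else a (j + (i + 1))) * x ^ (i + 1)
          = φ (a (j + (i + 1))) * x ^ (i + 1) := by
        intro i _
        rw [if_neg (by omega)]
      rw [Finset.sum_congr rfl hstep]
      -- y = ∑_{i ∈ range (n+1-j)} φ (a (j+i)) x^i = φ(a j) + ∑_{i ∈ range (n-j)} φ(a (j+i+1)) x^(i+1)
      have hysplit : y = ∑ i ∈ range (n - j), φ (a (j + (i + 1))) * x ^ (i + 1) + φ (a j) := by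
        rw [hy, show n + 1 - j = (n - j) + 1 by omega, Finset.sum_range_succ']
        simp
      have : φ (a j - b) = φ (a j) - y := by rw [map_sub, hb]
      rw [this, hysplit]
      ring
end GH


open Finset Polynomial

section Poly

variable {K L : Type*} [Field K] [Field L] [Algebra K L] [FiniteDimensional K L]

/-- Every element of a finite extension of a valued field satisfies a polynomial
with coefficients in `O`, one of which is `1`. -/
lemma exists_unit_content_poly (O : ValuationSubring K) (x : L) :
    ∃ (n : ℕ) (c : ℕ → O) (j : ℕ), j ≤ n ∧ c j = 1 ∧
      ∑ i ∈ range (n + 1), algebraMap K L (c i) * x ^ i = 0 := by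
  classical
  have halg : IsAlgebraic K x := (Algebra.IsAlgebraic.of_finite K L).isAlgebraic x
  obtain ⟨p, hp0, hpx⟩ := halg
  set n := p.natDegree with hn
  set s : Finset ℕ := (range (n + 1)).filter (fun i => p.coeff i ≠ 0) with hs
  have hns : n ∈ s := by
    rw [hs, mem_filter, mem_range]
    exact ⟨by omega, Polynomial.leadingCoeff_ne_zero.mpr hp0⟩
  obtain ⟨i₀, hi₀s, hmax⟩ := Finset.exists_max_image s (fun i => O.valuation (p.coeff i)) ⟨n, hns⟩
  have h0 : p.coeff i₀ ≠ 0 := (mem_filter.mp hi₀s).2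
  have hmem : ∀ i, p.coeff i / p.coeff i₀ ∈ O := by
    intro i
    by_cases h : p.coeff i = 0
    · rw [h, zero_div]; exact O.zero_mem
    · have hi : i ∈ s := by
        rw [hs, mem_filter, mem_range]
        exact ⟨Nat.lt_succ_of_le (Polynomial.le_natDegree_of_ne_zero h), h⟩
      have hle := hmax i hi
      apply (O.valuation_le_one_iff _).mp
      rw [map_div₀]
      refine (div_le_one₀ ?_).mpr hle
      rw [zero_lt_iff]
      exact (Valuation.ne_zero_iff _).mpr h0
  refine ⟨n, fun i => ⟨p.coeff i / p.coeff i₀, hmem i⟩, i₀,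
    by have := (mem_filter.mp hi₀s).1; rw [mem_range] at this; omega,
    Subtype.ext (div_self h0), ?_⟩
  have hsum : ∑ i ∈ range (n + 1), p.coeff i • x ^ i = 0 := by
    rw [← Polynomial.aeval_eq_sum_range, hpx]
  calc ∑ i ∈ range (n + 1), algebraMap K L (p.coeff i / p.coeff i₀) * x ^ i
      = (∑ i ∈ range (n + 1), p.coeff i • x ^ i) * (algebraMap K L (p.coeff i₀))⁻¹ := by
        rw [Finset.sum_mul]
        refine Finset.sum_congr rfl fun i _ => ?_
        rw [Algebra.smul_def, div_eq_mul_inv, map_mul, map_inv₀]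
        ring
    _ = 0 := by rw [hsum, zero_mul]

end Poly

set_option synthInstance.maxHeartbeats 1000000 in
set_option maxHeartbeats 2000000 in
/-- let `(K, O)` be a valued field, `L/K` a finite field extension, and `A` a
subring of `L` containing (the image of) `O` that is integrally closed in `L`. Then `A` is
a Prüfer domain: for every prime ideal `q` of `A`, the localization `A_q` is a valuation
ring, i.e. for any two elements `a`, `b` of `A_q`, either `a` divides `b` or `b` divides
`a`. -/
theorem prufer_of_integrally_closed_over_valuation
    {K L : Type*} [Field K] [Field L] [Algebra K L] [FiniteDimensional K L]
    (O : ValuationSubring K) (A : Subring L)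
    (hOA : ∀ x : K, x ∈ O → algebraMap K L x ∈ A)
    (hA : ∀ x : L, IsIntegral A x → x ∈ A)
    (q : Ideal A) [q.IsPrime] :
    ∀ a b : Localization.AtPrime q, a ∣ b ∨ b ∣ a := by
  set R := Localization.AtPrime q with hR
  have hu : ∀ s : q.primeCompl, IsUnit (A.subtype s) := by
    rintro ⟨s, hs⟩
    have hs0 : s ≠ 0 := fun h => hs (h ▸ q.zero_mem)
    refine isUnit_iff_ne_zero.mpr (fun h => hs0 (Subtype.ext ?_))
    simpa using h
  set φ : R →+* L := IsLocalization.lift (M := q.primeCompl) (S := R) hu with hφdef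
  have hφa : ∀ r : A, φ (algebraMap A R r) = (r : L) := fun r =>
    IsLocalization.lift_eq hu r
  letI : Algebra R L := φ.toAlgebra
  haveI : IsScalarTower A R L := IsScalarTower.of_algebraMap_eq (fun r => (hφa r).symm)
  have hARinj : Function.Injective (algebraMap A R) :=
    IsLocalization.injective (M := q.primeCompl) R (fun s hs => mem_nonZeroDivisors_of_ne_zero
      (fun h => (hs : s ∉ q) (h ▸ q.zero_mem)))
  have hinj : Function.Injective φ := by
    rw [hφdef, IsLocalization.lift_injective_iff]
    intro u v
    constructor
    · intro h
      have : u = v := hARinj h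
      rw [this]
    · intro h
      have : u = v := Subtype.ext (by simpa using h)
      rw [this]
  have hφeq : algebraMap R L = φ := rfl
  have hic : ∀ y : L, IsIntegral R y → ∃ r : R, algebraMap R L r = y := by
    intro y hy
    obtain ⟨m, hm⟩ :=
      hy.exists_multiple_integral_of_isLocalization (M := q.primeCompl)
    have hmem : (m : A) • y ∈ A := hA _ (by exact_mod_cast hm)
    have hm0 : (((m : A)) : L) ≠ 0 := by
      intro h
      exact m.2 (by simpa using (Subtype.ext h : (m : A) = 0) ▸ q.zero_mem)
    refine ⟨IsLocalization.mk' R (⟨(m : A) • y, hmem⟩ : A) m, ?_⟩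
    have hspec := IsLocalization.mk'_spec R (⟨(m : A) • y, hmem⟩ : A) m
    apply_fun φ at hspec
    rw [map_mul, hφa, hφa] at hspec
    have hms : ((⟨(m : A) • y, hmem⟩ : A) : L) = ((m : A) : L) * y := by
      show (m : A) • y = _
      rw [Algebra.smul_def]
      rfl
    rw [hms] at hspec
    rw [hφeq]
    exact mul_right_cancel₀ hm0 (by rw [hspec]; ring)
  intro a b
  rcases eq_or_ne (φ b) 0 with hb0 | hb0
  · left
    have : b = 0 := hinj (by rw [hb0, map_zero])
    rw [this]
    exact dvd_zero a
  rcases eq_or_ne (φ a) 0 with ha0 | ha0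
  · right
    have : a = 0 := hinj (by rw [ha0, map_zero])
    rw [this]
    exact dvd_zero b
  set x : L := φ a * (φ b)⁻¹ with hxdef
  have hx : x ≠ 0 := mul_ne_zero ha0 (inv_ne_zero hb0)
  obtain ⟨n, c, j, hjn, hc1, hcx⟩ := exists_unit_content_poly O x
  set d : ℕ → R := fun i => algebraMap A R ⟨algebraMap K L (c i), hOA _ (c i).2⟩ with hd
  have hdu : IsUnit (d j) := by
    have : (⟨algebraMap K L (c j), hOA _ (c j).2⟩ : A) = 1 := by
      refine Subtype.ext ?_
      show algebraMap K L (c j) = 1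
      rw [hc1]
      exact map_one _
    rw [hd]
    simp only [this, map_one]
    exact isUnit_one
  have hdroot : ∑ i ∈ range (n + 1), algebraMap R L (d i) * x ^ i = 0 := by
    have he : ∀ i, algebraMap R L (d i) = algebraMap K L (c i) := fun i => hφa _
    simp only [he]
    exact hcx
  rcases gh_main (hφeq ▸ hinj) hic hx n d j hjn hdu hdroot with ⟨r, hr⟩ | ⟨r, hr⟩
  · right
    refine ⟨r, hinj ?_⟩
    rw [map_mul]
    rw [hφeq] at hr
    rw [hr, hxdef]
    field_simp
  · left
    refine ⟨r, hinj ?_⟩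
    rw [map_mul]
    rw [hφeq] at hr
    have : x⁻¹ = φ b * (φ a)⁻¹ := by
      rw [hxdef]
      field_simp
    rw [hr, this]
    field_simp
end

section
/- For every field K, the space Val(K) of all valuation subrings of K, equipped with the Zariski topology, is quasi-compact. -/
/-- The Zariski topology on the space `Val(K)` of all valuation subrings of a field `K`:
it is generated by the subbasic open sets `U_x = {O : x ∈ O}` for `x ∈ K`. -/
def zariskiTopology (K : Type*) [Field K] : TopologicalSpace (ValuationSubring K) :=
  TopologicalSpace.generateFrom
    {U | ∃ x : K, U = {O : ValuationSubring K | x ∈ O}}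

/-- The limit valuation subring associated to an ultrafilter on `Val(K)`. -/
def ultraLimit {K : Type*} [Field K] (F : Ultrafilter (ValuationSubring K)) :
    ValuationSubring K where
  carrier := {x : K | {O : ValuationSubring K | x ∈ O} ∈ F}
  mul_mem' := by
    intro a b ha hb
    exact Filter.mem_of_superset (Filter.inter_mem ha hb)
      (fun O hO => by simp only [Set.mem_setOf_eq] at hO ⊢; exact mul_mem hO.1 hO.2)
  one_mem' := by
    simp only [Set.mem_setOf_eq]
    exact Filter.mem_of_superset Filter.univ_mem (fun O _ => one_mem O)
  add_mem' := by
    intro a b ha hb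
    exact Filter.mem_of_superset (Filter.inter_mem ha hb)
      (fun O hO => by simp only [Set.mem_setOf_eq] at hO ⊢; exact add_mem hO.1 hO.2)
  zero_mem' := by
    simp only [Set.mem_setOf_eq]
    exact Filter.mem_of_superset Filter.univ_mem (fun O _ => zero_mem O)
  neg_mem' := by
    intro a ha
    exact Filter.mem_of_superset ha (fun O hO => by simp only [Set.mem_setOf_eq] at hO ⊢; exact neg_mem hO)
  mem_or_inv_mem' := by
    intro x
    by_cases h : {O : ValuationSubring K | x ∈ O} ∈ F
    · exact Or.inl h
    · right
      have h' : {O : ValuationSubring K | x ∈ O}ᶜ ∈ F :=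
        Ultrafilter.compl_mem_iff_notMem.mpr h
      exact Filter.mem_of_superset h' (fun O hO => (O.mem_or_inv_mem x).resolve_left hO)

/-- For every field `K`, the space `Val(K)` of all valuation subrings of `K`,
equipped with the Zariski topology, is quasi-compact. -/
theorem val_zariski_quasiCompact (K : Type*) [Field K] :
    @CompactSpace (ValuationSubring K) (zariskiTopology K) := by
  letI := zariskiTopology K
  constructor
  rw [isCompact_iff_ultrafilter_le_nhds]
  intro F _
  refine ⟨ultraLimit F, Set.mem_univ _, ?_⟩
  rw [zariskiTopology, TopologicalSpace.nhds_generateFrom]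
  refine le_iInf fun U => le_iInf fun hU => ?_
  obtain ⟨hmem, x, rfl⟩ := hU
  exact Filter.le_principal_iff.mpr hmem
end

section
/- For every field K, the space Val(K) of all valuation subrings of K, equipped with the patch (constructible) topology, is compact and Hausdorff. -/
/-- The patch (constructible) topology on the space `Val(K)` of all valuation subrings of a
field `K`: it is generated by the sets `U_x = {O : x ∈ O}` for `x ∈ K` together with their
complements. -/
def patchTopology (K : Type*) [Field K] : TopologicalSpace (ValuationSubring K) :=
  TopologicalSpace.generateFrom
    {U | ∃ x : K, U = {O : ValuationSubring K | x ∈ O} ∨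
      U = {O : ValuationSubring K | x ∈ O}ᶜ}

noncomputable def valEmb (K : Type*) [Field K] : ValuationSubring K → K → Bool :=
  fun O x => @decide (x ∈ O) (Classical.propDecidable _)

lemma valEmb_eq_true {K : Type*} [Field K] {O : ValuationSubring K} {x : K} :
    valEmb K O x = true ↔ x ∈ O := by
  simp [valEmb]

lemma valEmb_injective (K : Type*) [Field K] : Function.Injective (valEmb K) := by
  intro O O' h
  ext x
  rw [← valEmb_eq_true, ← valEmb_eq_true, h]

lemma patch_eq_induced (K : Type*) [Field K] :
    patchTopology K = TopologicalSpace.induced (valEmb K) Pi.topologicalSpace := by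
  letI := patchTopology K
  refine le_antisymm ?_ (le_generateFrom ?_)
  · rw [← continuous_iff_le_induced]
    refine continuous_pi fun x => ?_
    rw [continuous_discrete_rng]
    intro b
    cases b
    · have : ((fun O => valEmb K O x) ⁻¹' {false}) = {O : ValuationSubring K | x ∈ O}ᶜ := by
        ext O
        simp [valEmb_eq_true, valEmb]
      rw [this]
      exact TopologicalSpace.GenerateOpen.basic _ ⟨x, Or.inr rfl⟩
    · have : ((fun O => valEmb K O x) ⁻¹' {true}) = {O : ValuationSubring K | x ∈ O} := by
        ext O
        simp [valEmb_eq_true]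
      rw [this]
      exact TopologicalSpace.GenerateOpen.basic _ ⟨x, Or.inl rfl⟩
  · rintro U ⟨x, rfl | rfl⟩
    · refine ⟨Function.eval x ⁻¹' {true}, ?_, ?_⟩
      · exact (isOpen_discrete _).preimage (continuous_apply x)
      · ext O; simp [valEmb_eq_true, Function.eval]
    · refine ⟨Function.eval x ⁻¹' {false}, ?_, ?_⟩
      · exact (isOpen_discrete _).preimage (continuous_apply x)
      · ext O; simp [valEmb_eq_true, valEmb, Function.eval]

lemma isClosed_range_valEmb (K : Type*) [Field K] :
    IsClosed (Set.range (valEmb K)) := by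
  have hset : ∀ (z : K) (b : Bool), IsClosed {f : K → Bool | f z = b} := fun z b => by
    have h : {f : K → Bool | f z = b} = (fun f : K → Bool => f z) ⁻¹' {b} := rfl
    rw [h]
    exact (isClosed_discrete _).preimage (continuous_apply z)
  have hrange : Set.range (valEmb K) =
      ({f : K → Bool | f 1 = true} ∩ {f | f 0 = true} ∩
        (⋂ x : K, ⋂ y : K,
          {f : K → Bool | f x = false} ∪ {f | f y = false} ∪ {f | f (x + y) = true}) ∩
        (⋂ x : K, ⋂ y : K,
          {f : K → Bool | f x = false} ∪ {f | f y = false} ∪ {f | f (x * y) = true}) ∩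
        (⋂ x : K, {f : K → Bool | f x = false} ∪ {f | f (-x) = true}) ∩
        (⋂ x : K, {f : K → Bool | f x = true} ∪ {f | f x⁻¹ = true})) := by
    ext f
    constructor
    · rintro ⟨O, rfl⟩
      refine ⟨⟨⟨⟨⟨valEmb_eq_true.2 O.one_mem, valEmb_eq_true.2 O.zero_mem⟩, ?_⟩, ?_⟩, ?_⟩, ?_⟩
      · simp only [Set.mem_iInter]
        intro x y
        by_cases hx : x ∈ O
        · by_cases hy : y ∈ O
          · exact Or.inr (valEmb_eq_true.2 (O.add_mem _ _ hx hy))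
          · exact Or.inl (Or.inr (by simp [valEmb, hy]))
        · exact Or.inl (Or.inl (by simp [valEmb, hx]))
      · simp only [Set.mem_iInter]
        intro x y
        by_cases hx : x ∈ O
        · by_cases hy : y ∈ O
          · exact Or.inr (valEmb_eq_true.2 (O.mul_mem _ _ hx hy))
          · exact Or.inl (Or.inr (by simp [valEmb, hy]))
        · exact Or.inl (Or.inl (by simp [valEmb, hx]))
      · simp only [Set.mem_iInter]
        intro x
        by_cases hx : x ∈ O
        · exact Or.inr (valEmb_eq_true.2 (O.neg_mem _ hx))
        · exact Or.inl (by simp [valEmb, hx])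
      · simp only [Set.mem_iInter]
        intro x
        rcases O.mem_or_inv_mem x with h | h
        · exact Or.inl (valEmb_eq_true.2 h)
        · exact Or.inr (valEmb_eq_true.2 h)
    · rintro ⟨⟨⟨⟨⟨h1, h0⟩, hadd⟩, hmul⟩, hneg⟩, hinv⟩
      simp only [Set.mem_iInter, Set.mem_union, Set.mem_setOf_eq] at h1 h0 hadd hmul hneg hinv
      refine ⟨{ carrier := {x : K | f x = true}
                one_mem' := h1
                zero_mem' := h0
                add_mem' := fun {a b} ha hb => ?_
                mul_mem' := fun {a b} ha hb => ?_
                neg_mem' := fun {a} ha => ?_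
                mem_or_inv_mem' := fun x => hinv x }, ?_⟩
      · rcases hmul a b with (h | h) | h
        · rw [ha] at h; exact absurd h (by simp)
        · rw [hb] at h; exact absurd h (by simp)
        · exact h
      · rcases hadd a b with (h | h) | h
        · rw [ha] at h; exact absurd h (by simp)
        · rw [hb] at h; exact absurd h (by simp)
        · exact h
      · rcases hneg a with h | h
        · rw [ha] at h; exact absurd h (by simp)
        · exact h
      · funext x
        by_cases hx : f x = true
        · rw [hx]
          exact valEmb_eq_true.2 hx
        · simp only [Bool.not_eq_true] at hx
          rw [hx]
          simp only [valEmb, decide_eq_false_iff_not]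
          intro hmem
          have hf : f x = true := hmem
          rw [hf] at hx
          exact Bool.noConfusion hx
  rw [hrange]
  refine (((((hset 1 true).inter (hset 0 true)).inter ?_).inter ?_).inter ?_).inter ?_
  · exact isClosed_iInter fun x => isClosed_iInter fun y =>
      (((hset x false).union (hset y false)).union (hset (x + y) true))
  · exact isClosed_iInter fun x => isClosed_iInter fun y =>
      (((hset x false).union (hset y false)).union (hset (x * y) true))
  · exact isClosed_iInter fun x => ((hset x false).union (hset (-x) true))
  · exact isClosed_iInter fun x => ((hset x true).union (hset x⁻¹ true))

/-- For every field `K`, the space `Val(K)` of all valuation subrings of `K`,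
equipped with the patch (constructible) topology, is compact and Hausdorff. -/
theorem val_patch_compact_hausdorff (K : Type*) [Field K] :
    @CompactSpace (ValuationSubring K) (patchTopology K) ∧
      @T2Space (ValuationSubring K) (patchTopology K) := by
  letI := patchTopology K
  have hind : Topology.IsInducing (valEmb K) := ⟨patch_eq_induced K⟩
  have hemb : Topology.IsEmbedding (valEmb K) := ⟨hind, valEmb_injective K⟩
  have hce : Topology.IsClosedEmbedding (valEmb K) := ⟨hemb, isClosed_range_valEmb K⟩
  exact ⟨hce.compactSpace, hemb.t2Space⟩
end

section
/- For every field K with algebraic closure K^a and every set of primes 𝒫, there exists an intermediate field M of K^a/K such that every finite subextension of M/K has degree a 𝒫-number (M/K is a 𝒫-extension), and M is 𝒫-closed, i.e. M has no finite field extension of degree a 𝒫-number greater than 1. -/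
/-!
Zorn's lemma gives an intermediate field `M` of `K^a/K` maximal among `𝒫`-extensions of `K`:
being a `𝒫`-extension is a condition on finite subextensions, and these are compact elements
of the lattice of intermediate fields. Such an `M` is `𝒫`-closed. Indeed, a finite extension of `M`
of `𝒫`-degree embeds into `K^a` as some `N ⊇ M`, and `N/K` is again a `𝒫`-extension: every finite
`E ≤ N` lies in an extension `T` of a finite `F ≤ M` with `[T : F] = [M(E) : M]`, a divisor of
`[N : M]`, so `[E : K]` divides `[F : K] [T : F]`. Maximality then forces `N = M`.
-/

universe u

/-- A `𝒫`-number: a positive integer all of whose prime divisors lie in `𝒫`. -/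
def IsPNumber (P : Set ℕ) (n : ℕ) : Prop :=
  0 < n ∧ ∀ q : ℕ, q.Prime → q ∣ n → q ∈ P

open IntermediateField Module Submodule
open scoped Pointwise

theorem IsPNumber.of_dvd {P : Set ℕ} {m n : ℕ} (hn : IsPNumber P n) (hmn : m ∣ n) :
    IsPNumber P m :=
  ⟨Nat.pos_of_dvd_of_pos hmn hn.1, fun q hq hqm => hn.2 q hq (hqm.trans hmn)⟩

theorem IsPNumber.mul {P : Set ℕ} {m n : ℕ} (hm : IsPNumber P m) (hn : IsPNumber P n) :
    IsPNumber P (m * n) :=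
  ⟨Nat.mul_pos hm.1 hn.1, fun q hq hqmn => (hq.dvd_mul.1 hqmn).elim (hm.2 q hq) (hn.2 q hq)⟩

section

variable {K L : Type*} [Field K] [Field L] [Algebra K L]

theorem LinearIndependent.of_intermediateField_le {F M : IntermediateField K L} (h : F ≤ M)
    {ι : Type*} {v : ι → L} (hv : LinearIndependent M v) : LinearIndependent F v := by
  let _ : Algebra F M := (inclusion h).toAlgebra
  have : IsScalarTower F M L := .of_algebraMap_eq fun _ => rfl
  have : FaithfulSMul F M :=
    (faithfulSMul_iff_algebraMap_injective F M).2 (algebraMap F M).injective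
  exact hv.restrict_scalars' F

namespace IntermediateField

theorem exists_toSubmodule_eq_span {F : Type*} [Field F] [Algebra F L]
    {s : Set L} (hs : s.Finite) (hone : 1 ∈ span F s) (hmul : s * s ⊆ (span F s : Set L)) :
    ∃ T : IntermediateField F L, T.toSubalgebra.toSubmodule = span F s := by
  have hmul' : ∀ x y, x ∈ span F s → y ∈ span F s → x * y ∈ span F s := fun x y hx hy => by
    have : span F s * span F s ≤ span F s := by rw [span_mul_span]; exact span_le.2 hmul
    exact this (mul_mem_mul hx hy)
  let S := (span F s).toSubalgebra hone hmul'
  have : FiniteDimensional F S := FiniteDimensional.span_of_finite F hs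
  have hS : S.IsAlgebraic := (Subalgebra.isAlgebraic_iff S).2 inferInstance
  exact ⟨hS.toIntermediateField, rfl⟩

theorem exists_finiteDimensional_subset_span [Algebra.IsAlgebraic K L]
    (M : IntermediateField K L) {s t : Set L} (ht : t.Finite) (hts : t ⊆ span M s) :
    ∃ F ≤ M, FiniteDimensional K F ∧ t ⊆ span F s := by
  have := ht.to_subtype
  choose n c g hcg using fun x : t => mem_span_set'.1 (hts x.2)
  let C : Set L := ⋃ x, Set.range fun i => (c x i : L)
  refine ⟨adjoin K C, adjoin_le_iff.2 ?_, finiteDimensional_adjoin fun x _ =>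
    (Algebra.IsAlgebraic.isAlgebraic x).isIntegral, fun x hx => ?_⟩
  · rintro _ ⟨_, ⟨x, rfl⟩, ⟨i, rfl⟩⟩
    exact (c x i).2
  · change ((⟨x, hx⟩ : t) : L) ∈ _
    rw [← hcg ⟨x, hx⟩]
    refine sum_mem fun i _ => ?_
    have hci : (c ⟨x, hx⟩ i : L) ∈ adjoin K C :=
      subset_adjoin K C (Set.mem_iUnion.2 ⟨⟨x, hx⟩, i, rfl⟩)
    rw [IntermediateField.smul_def, ← IntermediateField.smul_def (⟨_, hci⟩ : adjoin K C)]
    exact Submodule.smul_mem _ _ (subset_span (g ⟨x, hx⟩ i).2)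

/-- An `M`-basis `b ⊆ E` of `M(E)` remains linearly independent over the field `F` generated by
the coefficients that express a `K`-spanning set of `E` in `b`, and its `F`-span is a field. -/
theorem exists_finiteDimensional_finrank_eq_finrank_adjoin
    [Algebra.IsAlgebraic K L] (M E : IntermediateField K L) [FiniteDimensional K E] :
    ∃ F ≤ M, FiniteDimensional K F ∧ ∃ T : IntermediateField F L,
      E ≤ T.restrictScalars K ∧ finrank F T = finrank M (adjoin M (E : Set L)) := by
  obtain ⟨b, hbE, hspan, hli⟩ := exists_linearIndependent M (E : Set L)
  have hEb : (E : Set L) ⊆ span M b := hspan ▸ subset_span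
  have : Finite b := (LinearIndependent.of_comp E.val.toLinearMap (hli.restrict_scalars' K) :
    LinearIndependent K fun x : b => (⟨x, hbE x.2⟩ : E)).finite
  have := Fintype.ofFinite b
  have hbb : b * b ⊆ E := Set.mul_subset_iff.2 fun x hx y hy => mul_mem (hbE hx) (hbE hy)
  obtain ⟨t, ht, htE⟩ :=
    Submodule.fg_def.1 ((fg_iff_finiteDimensional E.toSubalgebra.toSubmodule).2 ‹_›)
  obtain ⟨F, hFM, hF, htb⟩ :=
    M.exists_finiteDimensional_subset_span ht ((htE ▸ subset_span).trans hEb)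
  have hEF : (E : Set L) ⊆ span F b := fun x hx =>
    span_le (p := (span F b).restrictScalars K).2 htb
      (htE.symm ▸ (hx : x ∈ E.toSubalgebra.toSubmodule))
  obtain ⟨T, hT⟩ :=
    exists_toSubmodule_eq_span (Set.toFinite b) (hEF (one_mem E)) (hbb.trans hEF)
  obtain ⟨TM, hTM⟩ :=
    exists_toSubmodule_eq_span (Set.toFinite b) (hEb (one_mem E)) (hbb.trans hEb)
  have hTM_eq : TM = adjoin M E := by
    refine le_antisymm (fun x hx => ?_) (adjoin_le_iff.2 fun x hx => ?_)
    · have hbE' : b ⊆ (adjoin M (E : Set L)).toSubalgebra.toSubmodule :=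
        hbE.trans (subset_adjoin M _)
      exact span_le.2 hbE' (hTM ▸ hx)
    · exact (hTM ▸ hEb hx :)
  refine ⟨F, hFM, hF, T, fun x hx => (hT ▸ hEF hx :), ?_⟩
  calc finrank F T = finrank F (span F b) := by rw [← hT]; rfl
    _ = finrank M (span M b) := by
      rw [finrank_span_set_eq_card hli,
        finrank_span_set_eq_card (hli.of_intermediateField_le hFM)]
    _ = finrank M (adjoin M (E : Set L)) := by rw [← hTM, hTM_eq]; rfl

theorem isCompactElement_of_finiteDimensional (E : IntermediateField K L)
    [FiniteDimensional K E] : IsCompactElement E := by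
  obtain ⟨t, ht, htE⟩ := fg_def.1 (E.fg_of_fg_toSubalgebra
    (Subalgebra.fg_of_fg_toSubmodule ((fg_iff_finiteDimensional _).2 ‹_›)))
  exact htE ▸ adjoin_finite_isCompactElement ht

def IsPExtension (P : Set ℕ) (M : IntermediateField K L) : Prop :=
  ∀ E ≤ M, FiniteDimensional K E → IsPNumber P (finrank K E)

variable {P : Set ℕ}

theorem isPExtension_bot : (⊥ : IntermediateField K L).IsPExtension P := by
  intro E hE _
  rw [le_bot_iff.1 hE, IntermediateField.finrank_bot]
  exact ⟨one_pos, fun q hq h => absurd (Nat.dvd_one.1 h) hq.ne_one⟩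

theorem IsPExtension.sSup {c : Set (IntermediateField K L)} (hne : c.Nonempty)
    (hc : DirectedOn (· ≤ ·) c) (h : ∀ M ∈ c, M.IsPExtension P) : (sSup c).IsPExtension P := by
  intro E hE _
  obtain ⟨M, hMc, hEM⟩ := (CompleteLattice.isCompactElement_iff_le_of_directed_sSup_le _ _).1
    E.isCompactElement_of_finiteDimensional c hne hc hE
  exact h M hMc E hEM ‹_›

theorem exists_maximal_isPExtension (P : Set ℕ) :
    ∃ M : IntermediateField K L, Maximal (IsPExtension P) M := by
  obtain ⟨M, -, hM⟩ := zorn_le_nonempty₀ {M : IntermediateField K L | M.IsPExtension P}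
    (fun c hc hchain N hN => ⟨sSup c, .sSup ⟨N, hN⟩ hchain.directedOn hc, fun _ => le_sSup⟩)
    ⊥ isPExtension_bot
  exact ⟨M, hM⟩

variable [Algebra.IsAlgebraic K L]

theorem IsPExtension.restrictScalars {M : IntermediateField K L} (hM : M.IsPExtension P)
    (N : IntermediateField M L) (hN : IsPNumber P (finrank M N)) :
    (N.restrictScalars K).IsPExtension P := by
  intro E hEN _
  obtain ⟨F, hFM, _, T, hET, hT⟩ := M.exists_finiteDimensional_finrank_eq_finrank_adjoin E
  have hTP : IsPNumber P (finrank K (T.restrictScalars K)) := by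
    change IsPNumber P (finrank K T)
    rw [← finrank_mul_finrank K F T, hT]
    exact (hM F hFM ‹_›).mul (hN.of_dvd (finrank_dvd_of_le_right (adjoin_le_iff.2 hEN)))
  exact hTP.of_dvd (finrank_dvd_of_le_right hET)

theorem finrank_eq_one_of_maximal_isPExtension {M : IntermediateField K L}
    (hM : Maximal (IsPExtension P) M) (N : IntermediateField M L)
    (hN : IsPNumber P (finrank M N)) : finrank M N = 1 := by
  have hNM : N.restrictScalars K ≤ M :=
    hM.2 (hM.1.restrictScalars N hN) fun x hx => N.algebraMap_mem ⟨x, hx⟩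
  rw [finrank_eq_one_iff, eq_bot_iff]
  exact fun x hx => mem_bot.2 ⟨⟨x, hNM hx⟩, rfl⟩

end IntermediateField

end

theorem exists_maximal_PExtension_general {K Ka : Type u} [Field K] [Field Ka] [Algebra K Ka]
    [IsAlgClosure K Ka] (P : Set ℕ) :
    ∃ M : IntermediateField K Ka,
      (∀ E : IntermediateField K Ka, E ≤ M → FiniteDimensional K E →
        IsPNumber P (Module.finrank K E)) ∧
      (∀ (L : Type u) [Field L] [Algebra M L], FiniteDimensional M L →
        IsPNumber P (Module.finrank M L) → Module.finrank M L = 1) := by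
  have : Algebra.IsAlgebraic K Ka := IsAlgClosure.isAlgebraic
  have : IsAlgClosed Ka := IsAlgClosure.isAlgClosed K
  obtain ⟨M, hM⟩ := exists_maximal_isPExtension (K := K) (L := Ka) P
  refine ⟨M, hM.1, fun L _ _ _ hLP => ?_⟩
  let φ : L →ₐ[M] Ka := IsAlgClosed.lift
  have hφ : finrank M φ.fieldRange = finrank M L :=
    (AlgEquiv.ofInjectiveField φ).toLinearEquiv.finrank_eq.symm
  rw [← hφ] at hLP ⊢
  exact finrank_eq_one_of_maximal_isPExtension hM _ hLP

/-- for every field `K` with algebraic closure `K^a` and every set of primes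
`𝒫`, there exists an intermediate field `M` of `K^a/K` such that `M/K` is a
`𝒫`-extension (every finite subextension of `M/K` has degree a `𝒫`-number), and `M` is
`𝒫`-closed (`M` has no finite field extension of degree a `𝒫`-number greater than
`1`). -/
theorem exists_maximal_PExtension {K Ka : Type u} [Field K] [Field Ka] [Algebra K Ka]
    [IsAlgClosure K Ka] (P : Set ℕ) (hP : ∀ p ∈ P, Nat.Prime p) :
    ∃ M : IntermediateField K Ka,
      (∀ E : IntermediateField K Ka, E ≤ M → FiniteDimensional K E →
        IsPNumber P (Module.finrank K E)) ∧
      (∀ (L : Type u) [Field L] [Algebra M L], FiniteDimensional M L →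
        IsPNumber P (Module.finrank M L) → Module.finrank M L = 1) :=
  exists_maximal_PExtension_general P
end

section
/- Let Y be a separated scheme and let G be a finite group acting on Y by scheme automorphisms. For a point y ∈ Y, let G_y denote the subgroup of those g ∈ G that fix the point y and induce the identity automorphism on the residue field κ(y). Then the non-tame locus T = {y ∈ Y : char κ(y) is a prime dividing the order of G_y} is a closed subset of Y. -/
universe u

open AlgebraicGeometry CategoryTheory

/-- The stabilizer `G_y` of a point `y` under an action of a group `G` on a scheme `Y` by
scheme automorphisms: the subgroup of those `g ∈ G` fixing the point `y` and inducing the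
identity automorphism on the residue field `κ(y)`. -/
def schemeStabilizer {Y : Scheme.{u}} {G : Type*} [Group G]
    (φ : G →* Aut Y) (y : Y) : Set G :=
  {g | ∃ h : (φ g).hom.base y = y,
    (φ g).hom.residueFieldMap y = eqToHom (by rw [h])}

/-!
`G_y` is the inertia group at `y`: `g ∈ G_y` exactly when `g ∘ (Spec κ(y) ⟶ Y)` equals
`Spec κ(y) ⟶ Y`. On a separated scheme the points where two morphisms agree in this sense
form the image of their equalizer, a closed subscheme, so each `{y | g ∈ G_y}` is closed.
By Cauchy's theorem a prime `p` divides `|G_y|` iff some `g ∈ G_y` has order `p`; hence the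
non-tame locus is the finite union, over the `g ∈ G` of prime order `p`, of
`{y | g ∈ G_y} ∩ V(p)`, and `V(p) = {y | char κ(y) = p}` is closed.
-/

open Limits

lemma prime_dvd_natCard_subgroup_iff {G : Type*} [Group G] (H : Subgroup G) [Finite H]
    {p : ℕ} (hp : p.Prime) : p ∣ Nat.card H ↔ ∃ g ∈ H, orderOf g = p := by
  have : Fact p.Prime := ⟨hp⟩
  constructor
  · intro hdvd
    obtain ⟨g, hg⟩ := exists_prime_orderOf_dvd_card' (G := H) p hdvd
    exact ⟨g, g.2, (Subgroup.orderOf_coe g).trans hg⟩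
  · rintro ⟨g, hg, rfl⟩
    simpa using orderOf_dvd_natCard (⟨g, hg⟩ : H)

lemma ringChar_eq_iff_natCast_eq_zero {K : Type*} [Field K] {p : ℕ} (hp : p.Prime) :
    ringChar K = p ↔ (p : K) = 0 :=
  ⟨fun h ↦ h ▸ ringChar.Nat.cast_ringChar, CharP.ringChar_of_prime_eq_zero hp⟩

namespace AlgebraicGeometry.Scheme

variable {X Y : Scheme.{u}}

lemma isClosed_setOf_ringChar_residueField_eq (X : Scheme.{u}) {p : ℕ} (hp : p.Prime) :
    IsClosed {x : X | ringChar (X.residueField x) = p} := by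
  convert (X.basicOpen (p : Γ(X, ⊤))).isOpen.isClosed_compl using 1
  ext x
  rw [Set.mem_ofPred_eq, ringChar_eq_iff_natCast_eq_zero hp, ← map_natCast (X.Γevaluation x).hom]
  exact X.evaluation_eq_zero_iff_notMem_basicOpen (U := ⊤) x trivial _

lemma fromSpecResidueField_comp_eq_self_iff (f : X ⟶ X) (x : X) :
    X.fromSpecResidueField x ≫ f = X.fromSpecResidueField x ↔
      ∃ h : f.base x = x, f.residueFieldMap x = eqToHom (by rw [h]) := by
  have hcongr (h : f.base x = x) : eqToHom (by rw [h]) = (X.residueFieldCongr h).hom := rfl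
  rw [← f.SpecMap_residueFieldMap_fromSpecResidueField]
  constructor
  · intro H
    have h : f.base x = x := by simpa using congr(($H).base default)
    refine ⟨h, Spec.map_injective ?_⟩
    rw [← cancel_mono (X.fromSpecResidueField (f.base x)), H, hcongr h,
      X.residueFieldCongr_fromSpecResidueField]
  · rintro ⟨h, e⟩
    rw [e, hcongr h, X.residueFieldCongr_fromSpecResidueField]

lemma isClosed_setOf_fromSpecResidueField_comp_eq [Y.IsSeparated] (f g : X ⟶ Y) :
    IsClosed {x : X | X.fromSpecResidueField x ≫ f = X.fromSpecResidueField x ≫ g} := by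
  have : IsSeparated (Over.mk (terminal.from Y)).hom :=
    inferInstanceAs (IsSeparated (terminal.from Y))
  let f' : Over.mk (terminal.from X) ⟶ Over.mk (terminal.from Y) := Over.homMk f
  let g' : Over.mk (terminal.from X) ⟶ Over.mk (terminal.from Y) := Over.homMk g
  let ι : (equalizer f' g').left ⟶ X := (equalizer.ι f' g').left
  have hι : ι ≫ f = ι ≫ g := congr($(equalizer.condition f' g').left)
  suffices {x : X | X.fromSpecResidueField x ≫ f = X.fromSpecResidueField x ≫ g} =
      Set.range ι by
    rw [this]
    exact ι.isClosedEmbedding.isClosed_range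
  ext x
  constructor
  · intro H
    let q : Over.mk (terminal.from (Spec (X.residueField x))) ⟶ Over.mk (terminal.from X) :=
      Over.homMk (X.fromSpecResidueField x)
    have hq : q ≫ f' = q ≫ g' := by ext1; exact H
    refine ⟨(equalizer.lift q hq).left (default : Spec (X.residueField x)), ?_⟩
    rw [← Hom.comp_apply, ← Over.comp_left, equalizer.lift_ι]
    exact X.fromSpecResidueField_apply x _
  · rintro ⟨e, rfl⟩
    -- `ι` is a closed immersion, so `κ(ι e) ⟶ κ(e)` is an isomorphism.
    rw [Set.mem_ofPred_eq, ← cancel_epi (Spec.map (ι.residueFieldMap e)),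
      Hom.SpecMap_residueFieldMap_fromSpecResidueField_assoc,
      Hom.SpecMap_residueFieldMap_fromSpecResidueField_assoc, hι]

def inertiaSubgroup (y : Y) : Subgroup (Aut Y) where
  carrier := {σ | Y.fromSpecResidueField y ≫ σ.hom = Y.fromSpecResidueField y}
  one_mem' := Category.comp_id _
  mul_mem' {σ τ} (hσ : _ ≫ σ.hom = _) (hτ : _ ≫ τ.hom = _) :=
    show _ ≫ τ.hom ≫ σ.hom = _ by rw [← Category.assoc, hτ, hσ]
  inv_mem' {σ} (hσ : _ ≫ σ.hom = _) := (Iso.comp_inv_eq (σ : Y ≅ Y)).2 hσ.symm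

lemma mem_inertiaSubgroup_iff {y : Y} {σ : Aut Y} :
    σ ∈ Y.inertiaSubgroup y ↔ Y.fromSpecResidueField y ≫ σ.hom = Y.fromSpecResidueField y :=
  Iff.rfl

lemma isClosed_setOf_mem_inertiaSubgroup [Y.IsSeparated] (σ : Aut Y) :
    IsClosed {y : Y | σ ∈ Y.inertiaSubgroup y} := by
  simpa [mem_inertiaSubgroup_iff] using isClosed_setOf_fromSpecResidueField_comp_eq σ.hom (𝟙 Y)

end AlgebraicGeometry.Scheme

lemma coe_comap_inertiaSubgroup {Y : Scheme.{u}} {G : Type*} [Group G] (φ : G →* Aut Y)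
    (y : Y) : ((Y.inertiaSubgroup y).comap φ : Set G) = schemeStabilizer φ y := by
  ext g
  exact Scheme.fromSpecResidueField_comp_eq_self_iff _ y

lemma nonTameLocus_eq_biUnion {Y : Scheme.{u}} {G : Type*} [Group G] [Finite G]
    (φ : G →* Aut Y) :
    {y : Y | ∃ p : ℕ, p.Prime ∧
      ringChar (Y.residueField y) = p ∧ p ∣ Nat.card (schemeStabilizer φ y)} =
    ⋃ g ∈ {g : G | (orderOf g).Prime},
      {y : Y | φ g ∈ Y.inertiaSubgroup y} ∩ {y | ringChar (Y.residueField y) = orderOf g} := by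
  ext y
  simp only [Set.mem_ofPred_eq, Set.mem_iUnion, Set.mem_inter_iff, exists_prop,
    ← coe_comap_inertiaSubgroup, SetLike.coe_sort_coe]
  constructor
  · rintro ⟨p, hp, hchar, hdvd⟩
    obtain ⟨g, hg, rfl⟩ := (prime_dvd_natCard_subgroup_iff _ hp).1 hdvd
    exact ⟨g, hp, hg, hchar⟩
  · rintro ⟨g, hg, hfix, hchar⟩
    exact ⟨_, hg, hchar, (prime_dvd_natCard_subgroup_iff _ hg).2 ⟨g, hfix, rfl⟩⟩

/-- let `Y` be a separated scheme and `G` a finite group acting on `Y` by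
scheme automorphisms. Then the non-tame locus
`T = {y ∈ Y : char κ(y) is a prime dividing the order of G_y}` is closed in `Y`. -/
theorem nonTameLocus_isClosed {Y : Scheme.{u}} [Y.IsSeparated]
    {G : Type*} [Group G] [Finite G] (φ : G →* Aut Y) :
    IsClosed {y : Y | ∃ p : ℕ, p.Prime ∧
      ringChar (Y.residueField y) = p ∧ p ∣ Nat.card (schemeStabilizer φ y)} := by
  rw [nonTameLocus_eq_biUnion]
  exact (Set.toFinite _).isClosed_biUnion fun g hg ↦
    (Y.isClosed_setOf_mem_inertiaSubgroup (φ g)).inter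
      (Y.isClosed_setOf_ringChar_residueField_eq hg)
end
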